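/- The finite continued fraction sum [2; 1,1,2,2,1,1,2,1] + [0; 1,2,2,2,2,1] equals 9933/3016, and 9933/3016 > α_∞ + 10^{-4} where α_∞ = [2; \overline{1,1,2,2,2,1,2}] + [0; 1,2,2,2,1,1,2,1,\overline{2}]. -/

import Mathlib

open Filter Topology

/-- Value of a finite continued fraction `[a₀; a₁, …, aₙ]` with natural-number entries
(the empty list has value 0, and a trailing `1/0 = 0` convention makes the recursion correct). -/
noncomputable def cfList : List ℕ → ℝ
  | [] => 0
  | a :: l => (a : ℝ) + 1 / cfList l

/-- `n`-th convergent `[a 0; a 1, …, a n]` of the infinite continued fraction with entries `a`. -/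
noncomputable def cfConvs (a : ℕ → ℕ) (n : ℕ) : ℝ :=
  cfList ((List.range (n + 1)).map a)

/-- `CFLim a x` : the infinite continued fraction `[a 0; a 1, a 2, …]` converges to `x`. -/
def CFLim (a : ℕ → ℕ) (x : ℝ) : Prop :=
  Tendsto (cfConvs a) atTop (nhds x)

/-- The eventually periodic sequence of partial quotients with preperiod `pre` and period `per`. -/
def epseq (pre per : List ℕ) : ℕ → ℕ :=
  fun n => if n < pre.length then pre.getD n 0 else per.getD ((n - pre.length) % per.length) 0

/-- `IsLambda B j v` : for the bi-infinite sequence `B`,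
`v = λ_j(B) = [B j; B (j+1), …] + [0; B (j-1), B (j-2), …]`. -/
def IsLambda (B : ℤ → ℕ) (j : ℤ) (v : ℝ) : Prop :=
  ∃ x y : ℝ,
    CFLim (fun n => B (j + n)) x ∧
    CFLim (fun n => if n = 0 then 0 else B (j - n)) y ∧
    v = x + y

/-!
When the partial quotients after the first are positive, every tail `[aₖ; aₖ₊₁, …]` lies in
`[aₖ, aₖ + 1]`, and `t ↦ [a₀; …, aₖ₋₁, t]` is monotone or antitone for `t > 0`; so the value lies
between the finite continued fractions ending in `aₖ` and in `aₖ + 1`. Cutting `x` after one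
period and `y` after the preperiod (both tails start with `2`) gives `x ≤ 287/111` and
`y ≤ 283/400`, and `287/111 + 283/400 + 10⁻⁴ < 9933/3016`.
-/

open Set

/-- `cfEval l t = [l₀; l₁, …, lₙ, t]`. -/
noncomputable def cfEval (l : List ℕ) (t : ℝ) : ℝ :=
  l.foldr (fun a s => a + 1 / s) t

lemma cfList_append (l r : List ℕ) : cfList (l ++ r) = cfEval l (cfList r) := by
  induction l with
  | nil => rfl
  | cons a l ih => simp only [List.cons_append, cfList, ih]; rfl

lemma cfEval_cons (a : ℕ) (l : List ℕ) (t : ℝ) : cfEval (a :: l) t = a + 1 / cfEval l t := rfl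

lemma cfEval_pos (l : List ℕ) {t : ℝ} (ht : 0 < t) : 0 < cfEval l t := by
  induction l with
  | nil => exact ht
  | cons a l ih => rw [cfEval_cons]; positivity

lemma one_div_mem_uIcc {s u v : ℝ} (hu : 0 < u) (hv : 0 < v) (hs : s ∈ uIcc u v) :
    1 / s ∈ uIcc (1 / u) (1 / v) := by
  rcases mem_uIcc.1 hs with ⟨hus, hsv⟩ | ⟨hvs, hsu⟩
  · exact mem_uIcc.2 <| Or.inr
      ⟨one_div_le_one_div_of_le (hu.trans_le hus) hsv, one_div_le_one_div_of_le hu hus⟩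
  · exact mem_uIcc.2 <| Or.inl
      ⟨one_div_le_one_div_of_le (hv.trans_le hvs) hsu, one_div_le_one_div_of_le hv hvs⟩

lemma cfEval_mem_uIcc (l : List ℕ) {lo hi t : ℝ} (hlo : 0 < lo) (hhi : 0 < hi)
    (ht : t ∈ uIcc lo hi) : cfEval l t ∈ uIcc (cfEval l lo) (cfEval l hi) := by
  induction l with
  | nil => exact ht
  | cons a l ih =>
    simp only [cfEval_cons]
    rw [← image_const_add_uIcc]
    exact mem_image_of_mem _ (one_div_mem_uIcc (cfEval_pos l hlo) (cfEval_pos l hhi) ih)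

lemma cfList_cons_mem_Icc (a : ℕ) {l : List ℕ} (hl : ∀ b ∈ l, 1 ≤ b) :
    cfList (a :: l) ∈ Icc (a : ℝ) (a + 1) := by
  induction l generalizing a with
  | nil => simp [cfList]
  | cons b l ih =>
    have hb : (1 : ℝ) ≤ cfList (b :: l) :=
      le_trans (by exact_mod_cast hl b (by simp)) (ih b fun c hc => hl c (by simp [hc])).1
    have hinv : 1 / cfList (b :: l) ≤ 1 := (div_le_one (by linarith)).2 hb
    have hinv_pos : 0 < 1 / cfList (b :: l) := by positivity
    change (a : ℝ) + 1 / cfList (b :: l) ∈ Icc (a : ℝ) (a + 1)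
    exact ⟨by linarith, by linarith⟩

lemma cfConvs_mem_Icc {c : ℕ → ℕ} (hc : ∀ n, 1 ≤ c (n + 1)) (n : ℕ) :
    cfConvs c n ∈ Icc (c 0 : ℝ) (c 0 + 1) := by
  unfold cfConvs
  rw [List.range_succ_eq_map, List.map_cons, List.map_map]
  refine cfList_cons_mem_Icc _ fun b hb => ?_
  obtain ⟨k, -, rfl⟩ := List.mem_map.1 hb
  exact hc k

lemma cfConvs_add (a : ℕ → ℕ) (m n : ℕ) :
    cfConvs a (n + m) = cfEval ((List.range m).map a) (cfConvs (fun i => a (m + i)) n) := by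
  unfold cfConvs
  rw [show n + m + 1 = m + (n + 1) by ring, List.range_add, List.map_append, cfList_append,
    List.map_map]
  rfl

theorem CFLim.mem_uIcc_cfEval {a : ℕ → ℕ} {z : ℝ} (h : CFLim a z) (ha : ∀ n, 1 ≤ a (n + 1))
    (k : ℕ) :
    z ∈ uIcc (cfEval ((List.range (k + 1)).map a) (a (k + 1)))
      (cfEval ((List.range (k + 1)).map a) (a (k + 1) + 1)) := by
  have hk : (0 : ℝ) < a (k + 1) := by exact_mod_cast ha k
  refine isClosed_Icc.mem_of_tendsto (h.comp (tendsto_add_atTop_nat (k + 1)))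
    (Eventually.of_forall fun n => ?_)
  simp only [Function.comp_apply, cfConvs_add]
  refine cfEval_mem_uIcc _ hk (by positivity) (Icc_subset_uIcc ?_)
  simpa only [add_zero] using cfConvs_mem_Icc (c := fun i => a (k + 1 + i)) (fun n => ha _) n

lemma epseq_cons_succ (b : ℕ) (pre per : List ℕ) (n : ℕ) :
    epseq (b :: pre) per (n + 1) = epseq pre per n := by
  simp [epseq, Nat.add_sub_add_right]

lemma epseq_mem {pre per : List ℕ} (hper : per ≠ []) (n : ℕ) : epseq pre per n ∈ pre ++ per := by
  unfold epseq
  split_ifs with h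
  · exact List.mem_append_left _ (List.getD_eq_getElem _ _ h ▸ List.getElem_mem h)
  · have hlt := Nat.mod_lt (n - pre.length) (List.length_pos_iff.2 hper)
    exact List.mem_append_right _ (List.getD_eq_getElem _ _ hlt ▸ List.getElem_mem hlt)

theorem stmt9 (x y : ℝ)
    (hx : CFLim (epseq [] [2,1,1,2,2,2,1]) x)
    (hy : CFLim (epseq [0,1,2,2,2,1,1,2,1] [2]) y) :
    cfList [2,1,1,2,2,1,1,2,1] + cfList [0,1,2,2,2,2,1] = 9933 / 3016 ∧
    9933 / 3016 > (x + y) + 1 / 10000 := by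
  refine ⟨by norm_num [cfList], ?_⟩
  have hx_pos : ∀ n, 1 ≤ epseq [] [2,1,1,2,2,2,1] (n + 1) := fun n =>
    (by decide : ∀ b ∈ [] ++ [2,1,1,2,2,2,1], 1 ≤ b) _ (epseq_mem (by simp) _)
  have hy_pos : ∀ n, 1 ≤ epseq [0,1,2,2,2,1,1,2,1] [2] (n + 1) := fun n => by
    rw [epseq_cons_succ]
    exact (by decide : ∀ b ∈ [1,2,2,2,1,1,2,1] ++ [2], 1 ≤ b) _ (epseq_mem (by simp) n)
  have hx_le : x ≤ 287 / 111 := by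
    have := (hx.mem_uIcc_cfEval hx_pos 6).2
    norm_num [cfEval, epseq, List.range_succ] at this
    exact this
  have hy_le : y ≤ 283 / 400 := by
    have := (hy.mem_uIcc_cfEval hy_pos 8).2
    norm_num [cfEval, epseq, List.range_succ] at this
    exact this
  linarith
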